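/- Let α > β + 1/2 > 0 and set λ = min(α - β - 1/2, 1). Then there is a constant C = C(α,β) such that for all 0 ≤ s < t ≤ 1, ∫₀^∞ x^{2β} ( t^α e^{-xt} - s^α e^{-xs} )² dx ≤ C (t-s)^{2λ}. -/

import Mathlib

/-!
Write the integrand as `((t^α - s^α) e^{-xt} - s^α (e^{-xs} - e^{-xt}))²` and bound its square by
twice the sum of squares, replacing `e^{-2xt}` by `e^{-xt}`. The first part integrates to
`(t^α - s^α)² Γ(2β+1) t^{-(2β+1)}`, which the mean value bound
`t^α - s^α ≤ max α 1 · t^{α-1} (t - s)` turns into a multiple of `(t - s)^{2λ}` since `t ≤ 1`.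
For the second, `1 - e^{-w} ≤ min 1 w ≤ w^λ` gives `e^{-xs} - e^{-xt} ≤ e^{-xs} (x (t - s))^λ`;
after integration the extra `x^{2λ}` costs a factor `s^{-(2β+2λ+1)}`, which `s^{2α}` absorbs
because `λ ≤ α - β - 1/2`.
-/

open MeasureTheory Set Real

lemma rpow_two_mul {y : ℝ} (hy : 0 ≤ y) (r : ℝ) : y ^ (2 * r) = (y ^ r) ^ 2 := by
  rw [mul_comm, rpow_mul hy, rpow_two]

lemma one_sub_exp_neg_le_rpow {w r : ℝ} (hw : 0 ≤ w) (hr0 : 0 ≤ r) (hr1 : r ≤ 1) :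
    1 - exp (-w) ≤ w ^ r := by
  rcases le_total w 1 with hw1 | hw1
  · calc 1 - exp (-w) ≤ w := by linarith [add_one_le_exp (-w)]
      _ ≤ w ^ r := self_le_rpow_of_le_one hw hw1 hr1
  · calc 1 - exp (-w) ≤ 1 := by linarith [exp_pos (-w)]
      _ ≤ w ^ r := one_le_rpow hw1 hr0

lemma exp_neg_sub_exp_neg_le {a b r : ℝ} (hab : a ≤ b) (hr0 : 0 ≤ r) (hr1 : r ≤ 1) :
    exp (-a) - exp (-b) ≤ exp (-a) * (b - a) ^ r := by
  have hb : exp (-b) = exp (-a) * exp (-(b - a)) := by rw [← exp_add]; ring_nf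
  rw [hb, ← mul_one_sub]
  exact mul_le_mul_of_nonneg_left (one_sub_exp_neg_le_rpow (sub_nonneg.2 hab) hr0 hr1)
    (exp_pos _).le

lemma one_sub_rpow_le {u α : ℝ} (hu0 : 0 ≤ u) (hu1 : u ≤ 1) :
    1 - u ^ α ≤ max α 1 * (1 - u) := by
  rcases le_total α 1 with hα | hα
  · rw [max_eq_right hα]
    linarith [self_le_rpow_of_le_one hu0 hu1 hα]
  · rw [max_eq_left hα]
    have := one_add_mul_self_le_rpow_one_add (by linarith : -1 ≤ u - 1) hα
    rw [add_sub_cancel] at this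
    linarith

lemma rpow_sub_rpow_le {α s t : ℝ} (hs : 0 ≤ s) (hst : s ≤ t) (ht : 0 < t) :
    t ^ α - s ^ α ≤ max α 1 * t ^ (α - 1) * (t - s) := by
  have hu : s = t * (s / t) := by field_simp
  have key := one_sub_rpow_le (α := α) (div_nonneg hs ht.le) ((div_le_one ht).2 hst)
  calc t ^ α - s ^ α = t ^ α * (1 - (s / t) ^ α) := by
        conv_lhs => rw [hu, mul_rpow ht.le (div_nonneg hs ht.le)]
        ring
    _ ≤ t ^ α * (max α 1 * (1 - s / t)) := by gcongr
    _ = max α 1 * t ^ (α - 1) * (t - s) := by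
        rw [rpow_sub_one ht.ne']; field_simp

lemma rpow_sub_one_mul_sub_le_rpow {γ r s t : ℝ} (hs : 0 ≤ s) (hst : s < t) (ht : t ≤ 1)
    (hr : r ≤ 1) (hrγ : r ≤ γ) :
    t ^ (γ - 1) * (t - s) ≤ (t - s) ^ r := by
  have ht0 : 0 < t := hs.trans_lt hst
  have hu0 : 0 ≤ (t - s) / t := div_nonneg (by linarith) ht0.le
  have hu1 : (t - s) / t ≤ 1 := (div_le_one ht0).2 (by linarith)
  have hts : t - s = t * ((t - s) / t) := by field_simp
  calc t ^ (γ - 1) * (t - s) = t ^ γ * ((t - s) / t) := by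
        rw [rpow_sub_one ht0.ne']; field_simp
    _ ≤ t ^ r * ((t - s) / t) ^ r :=
        mul_le_mul (rpow_le_rpow_of_exponent_ge ht0 ht hrγ) (self_le_rpow_of_le_one hu0 hu1 hr)
          hu0 (rpow_nonneg ht0.le r)
    _ = (t - s) ^ r := by rw [← mul_rpow ht0.le hu0, ← hts]

lemma sq_rpow_sub_rpow_mul_one_div_rpow_le {α a r s t : ℝ} (hα : 0 ≤ α) (hs : 0 ≤ s)
    (hst : s < t) (ht : t ≤ 1) (hr : r ≤ 1) (hra : r ≤ α - a / 2) :
    (t ^ α - s ^ α) ^ 2 * (1 / t) ^ a ≤ max α 1 ^ 2 * (t - s) ^ (2 * r) := by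
  have ht0 : 0 < t := hs.trans_lt hst
  have key : (t ^ α - s ^ α) * t ^ (-(a / 2)) ≤ max α 1 * (t - s) ^ r := calc
    (t ^ α - s ^ α) * t ^ (-(a / 2))
        ≤ max α 1 * t ^ (α - 1) * (t - s) * t ^ (-(a / 2)) := by
          gcongr; exact rpow_sub_rpow_le hs hst.le ht0
    _ = max α 1 * (t ^ (α - a / 2 - 1) * (t - s)) := by
          rw [show α - a / 2 - 1 = (α - 1) + -(a / 2) by ring, rpow_add ht0]; ring
    _ ≤ max α 1 * (t - s) ^ r := by
          gcongr; exact rpow_sub_one_mul_sub_le_rpow hs hst ht hr hra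
  have hdiff : 0 ≤ t ^ α - s ^ α := sub_nonneg.2 (rpow_le_rpow hs hst.le hα)
  have hsq : (1 / t) ^ a = (t ^ (-(a / 2))) ^ 2 := by
    rw [← rpow_natCast, ← rpow_mul ht0.le, one_div, inv_rpow ht0.le, ← rpow_neg ht0.le]
    norm_num
  have h2r : (t - s) ^ (2 * r) = ((t - s) ^ r) ^ 2 := by
    rw [← rpow_natCast, ← rpow_mul (by linarith)]; norm_num; ring_nf
  rw [hsq, h2r, ← mul_pow, ← mul_pow]
  exact pow_le_pow_left₀ (mul_nonneg hdiff (rpow_nonneg ht0.le _)) key 2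

lemma integrableOn_rpow_mul_exp_neg_mul {p b : ℝ} (hp : -1 < p) (hb : 0 < b) :
    IntegrableOn (fun x : ℝ => x ^ p * exp (-(b * x))) (Ioi 0) := by
  simpa [rpow_one, neg_mul] using integrableOn_rpow_mul_exp_neg_mul_rpow hp one_pos hb

lemma integral_rpow_mul_exp_neg_mul_Ioi' {p b : ℝ} (hp : -1 < p) (hb : 0 < b) :
    ∫ x in Ioi (0 : ℝ), x ^ p * exp (-(b * x)) = (1 / b) ^ (p + 1) * Gamma (p + 1) := by
  simpa using integral_rpow_mul_exp_neg_mul_Ioi (a := p + 1) (by linarith) hb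

lemma sq_rpow_sub_rpow_mul_integral_le {α p r s t : ℝ} (hα : 0 ≤ α) (hp : -1 < p) (hs : 0 ≤ s)
    (hst : s < t) (ht : t ≤ 1) (hr : r ≤ 1) (hrp : r ≤ α - (p + 1) / 2) :
    (t ^ α - s ^ α) ^ 2 * ∫ x in Ioi (0 : ℝ), x ^ p * exp (-(t * x)) ≤
      max α 1 ^ 2 * Gamma (p + 1) * (t - s) ^ (2 * r) := by
  rw [integral_rpow_mul_exp_neg_mul_Ioi' hp (hs.trans_lt hst), ← mul_assoc]
  have := sq_rpow_sub_rpow_mul_one_div_rpow_le hα hs hst ht hr hrp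
  have hΓ : 0 < Gamma (p + 1) := Gamma_pos_of_pos (by linarith)
  nlinarith

lemma rpow_mul_integral_rpow_mul_exp_neg_mul_le {p q s : ℝ} (hp : -1 < p) (hpq : p + 1 ≤ q)
    (hs : 0 ≤ s) (hs1 : s ≤ 1) :
    s ^ q * ∫ x in Ioi (0 : ℝ), x ^ p * exp (-(s * x)) ≤ Gamma (p + 1) := by
  have hΓ : 0 < Gamma (p + 1) := Gamma_pos_of_pos (by linarith)
  rcases hs.eq_or_lt with rfl | hs0
  · rw [zero_rpow (by linarith), zero_mul]
    exact hΓ.le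
  rw [integral_rpow_mul_exp_neg_mul_Ioi' hp hs0, ← mul_assoc, one_div, inv_rpow hs0.le,
    ← rpow_neg hs0.le, ← rpow_add hs0]
  exact mul_le_of_le_one_left hΓ.le (rpow_le_one hs0.le hs1 (by linarith))

lemma integrableOn_rpow_mul_rpow_mul_exp_neg_mul {p q s : ℝ} (hp : -1 < p) (hq : 0 < q)
    (hs : 0 ≤ s) :
    IntegrableOn (fun x : ℝ => s ^ q * (x ^ p * exp (-(s * x)))) (Ioi 0) := by
  rcases hs.eq_or_lt with rfl | hs0
  · simp [zero_rpow hq.ne']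
  exact (integrableOn_rpow_mul_exp_neg_mul hp hs0).const_mul _

lemma sq_rpow_mul_exp_neg_sub_le {α r s t x : ℝ} (hx : 0 ≤ x) (hs : 0 ≤ s) (hst : s ≤ t) (hr0 : 0 ≤ r)
    (hr1 : r ≤ 1) :
    (t ^ α * exp (-(x * t)) - s ^ α * exp (-(x * s))) ^ 2 ≤
      2 * (t ^ α - s ^ α) ^ 2 * exp (-(x * t)) +
        2 * (t - s) ^ (2 * r) * (s ^ (2 * α) * (x ^ (2 * r) * exp (-(x * s)))) := by
  set Et := exp (-(x * t))
  set Es := exp (-(x * s))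
  have hD := exp_neg_sub_exp_neg_le (mul_le_mul_of_nonneg_left hst hx) hr0 hr1
  rw [← mul_sub] at hD
  have hD0 : 0 ≤ Es - Et := sub_nonneg.2 (exp_le_exp.2 (by nlinarith))
  have hEt : Et ^ 2 ≤ Et := by
    nlinarith [exp_pos (-(x * t)), exp_le_one_iff.2 (by nlinarith : -(x * t) ≤ 0)]
  have hEs : Es ^ 2 ≤ Es := by
    nlinarith [exp_pos (-(x * s)), exp_le_one_iff.2 (by nlinarith : -(x * s) ≤ 0)]
  have h1 : (t ^ α - s ^ α) ^ 2 * Et ^ 2 ≤ (t ^ α - s ^ α) ^ 2 * Et := by gcongr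
  have h2 : (s ^ α) ^ 2 * (Es - Et) ^ 2 ≤
      (t - s) ^ (2 * r) * (s ^ (2 * α) * (x ^ (2 * r) * Es)) := calc
    (s ^ α) ^ 2 * (Es - Et) ^ 2 ≤ (s ^ α) ^ 2 * (Es * (x * (t - s)) ^ r) ^ 2 := by
      gcongr
    _ = ((t - s) ^ r) ^ 2 * ((s ^ α) ^ 2 * ((x ^ r) ^ 2 * Es ^ 2)) := by
      rw [mul_rpow hx (by linarith)]; ring
    _ ≤ (t - s) ^ (2 * r) * (s ^ (2 * α) * (x ^ (2 * r) * Es)) := by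
      rw [rpow_two_mul (by linarith), rpow_two_mul hs, rpow_two_mul hx]
      gcongr
  nlinarith [sq_nonneg ((t ^ α - s ^ α) * Et + s ^ α * (Es - Et))]

/-- **Hölder bound for the increment variance of the kernels.**
Let `α > β + 1/2 > 0` and `λ = min(α - β - 1/2, 1)`. Then there is `C = C(α,β)` such that for
all `0 ≤ s < t ≤ 1`, `∫₀^∞ x^{2β} (t^α e^{-xt} - s^α e^{-xs})² dx ≤ C (t-s)^{2λ}`
(with the convention `0^α e^{-x·0} = 0` for `s = 0`, which holds automatically since
`0^α = 0` for `α > 0`). -/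
theorem increment_variance_holder_bound
    (α β : ℝ) (hβ : 0 < β + 1 / 2) (hαβ : β + 1 / 2 < α) :
    ∃ C : ℝ, ∀ s t : ℝ, 0 ≤ s → s < t → t ≤ 1 →
      ∫ x in Set.Ioi (0 : ℝ),
          x ^ (2 * β) * (t ^ α * Real.exp (-(x * t)) - s ^ α * Real.exp (-(x * s))) ^ 2 ≤
        C * (t - s) ^ (2 * min (α - β - 1 / 2) 1) := by
  set r := min (α - β - 1 / 2) 1
  have hr0 : 0 ≤ r := le_min (by linarith) zero_le_one
  have hr1 : r ≤ 1 := min_le_right _ _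
  have hrγ : r ≤ α - β - 1 / 2 := min_le_left _ _
  refine ⟨2 * (max α 1 ^ 2 * Gamma (2 * β + 1)) + 2 * Gamma (2 * β + 2 * r + 1),
    fun s t hs hst ht => ?_⟩
  have hf := integrableOn_rpow_mul_exp_neg_mul (p := 2 * β) (by linarith) (hs.trans_lt hst)
  have hg := integrableOn_rpow_mul_rpow_mul_exp_neg_mul (p := 2 * β + 2 * r) (q := 2 * α)
    (by linarith) (by linarith) hs
  calc _ ≤ ∫ x in Ioi (0 : ℝ), (2 * (t ^ α - s ^ α) ^ 2 * (x ^ (2 * β) * exp (-(t * x))) +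
          2 * (t - s) ^ (2 * r) * (s ^ (2 * α) * (x ^ (2 * β + 2 * r) * exp (-(s * x))))) := by
        refine integral_mono_of_nonneg ?_ ((hf.const_mul _).add (hg.const_mul _)) ?_ <;>
          filter_upwards [ae_restrict_mem measurableSet_Ioi] with x (hx : 0 < x)
        · positivity
        · have := mul_le_mul_of_nonneg_left (sq_rpow_mul_exp_neg_sub_le (α := α) hx.le hs hst.le hr0 hr1)
            (rpow_nonneg hx.le (2 * β))
          rw [rpow_add hx, mul_comm t, mul_comm s]
          linarith
    _ = 2 * ((t ^ α - s ^ α) ^ 2 * ∫ x in Ioi (0 : ℝ), x ^ (2 * β) * exp (-(t * x))) +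
          2 * (t - s) ^ (2 * r) *
            (s ^ (2 * α) * ∫ x in Ioi (0 : ℝ), x ^ (2 * β + 2 * r) * exp (-(s * x))) := by
        rw [integral_add (hf.const_mul _) (hg.const_mul _), integral_const_mul,
          integral_const_mul, integral_const_mul]
        ring
    _ ≤ 2 * (max α 1 ^ 2 * Gamma (2 * β + 1) * (t - s) ^ (2 * r)) +
          2 * (t - s) ^ (2 * r) * Gamma (2 * β + 2 * r + 1) := by
        gcongr 2 * ?_ + _ * ?_
        · exact sq_rpow_sub_rpow_mul_integral_le (by linarith) (by linarith) hs hst ht hr1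
            (by linarith)
        · exact rpow_mul_integral_rpow_mul_exp_neg_mul_le (by linarith) (by linarith) hs
            (by linarith)
    _ = _ := by ring
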